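/- arXiv:2302.04403 — 8 statements merged into one kernel-verified Lean document; each statement's English description precedes it below -/
import Mathlib

section
/- A left ideal I of the free monoid A* is dense if and only if every infinite word W : ℕ → A has some initial segment belonging to I. -/
/-!
The initial segments of an infinite word `W` are closed under taking suffixes, so their
complement is a left ideal; it is closed because the initial segment of length `n` extends to
the one of length `n + 1`. This complement misses `ε`, and it contains `I` exactly when no
initial segment of `W` lies in `I`.

Conversely, if a closed set `C` misses `ε`, closedness lets us extend any word outside `C` by a
letter on the left while staying outside `C`; iterating from `ε` yields an infinite word none of
whose initial segments lies in `C`.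
-/

/-- A subset `I` of the free monoid `A*` (words as lists, multiplication is concatenation)
is a left ideal if `u ++ w ∈ I` whenever `w ∈ I`. -/
def IsLeftIdeal {A : Type*} (I : Set (List A)) : Prop :=
  ∀ u w : List A, w ∈ I → u ++ w ∈ I

/-- A subset of `A*` is closed if it is a left ideal, and contains `w` whenever it contains
`a :: w` for every letter `a`. -/
def IsClosedSubset {A : Type*} (C : Set (List A)) : Prop :=
  IsLeftIdeal C ∧ ∀ w : List A, (∀ a : A, (a :: w) ∈ C) → w ∈ C

/-- A left ideal is dense if the only closed subset containing it is all of `A*`. -/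
def IsDenseIdeal {A : Type*} (I : Set (List A)) : Prop :=
  ∀ C : Set (List A), IsClosedSubset C → I ⊆ C → C = Set.univ

/-- The initial segment `W(n-1) W(n-2) ⋯ W(0)` of an infinite word `W : ℕ → A`:
letters are appended on the left. -/
def initSeg {A : Type*} (W : ℕ → A) : ℕ → List A
  | 0 => []
  | n + 1 => W n :: initSeg W n

section

variable {A : Type*}

theorem IsLeftIdeal.eq_univ_of_nil_mem {C : Set (List A)} (hC : IsLeftIdeal C) (hnil : [] ∈ C) :
    C = Set.univ :=
  Set.eq_univ_of_forall fun w => by simpa using hC w [] hnil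

theorem exists_initSeg_eq_of_append_eq_initSeg (W : ℕ → A) {u w : List A} {m : ℕ}
    (h : u ++ w = initSeg W m) : ∃ n, initSeg W n = w := by
  induction u generalizing m with
  | nil => exact ⟨m, h.symm⟩
  | cons a u ih =>
    cases m with
    | zero => simp [initSeg] at h
    | succ m => exact ih (List.cons.inj h).2

theorem isClosedSubset_compl_range_initSeg (W : ℕ → A) :
    IsClosedSubset (Set.range (initSeg W))ᶜ := by
  refine ⟨fun u w hw ⟨m, hm⟩ => hw (exists_initSeg_eq_of_append_eq_initSeg W hm.symm), ?_⟩
  rintro w hw ⟨n, rfl⟩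
  exact hw (W n) ⟨n + 1, rfl⟩

theorem IsClosedSubset.exists_forall_initSeg_notMem {C : Set (List A)} (hC : IsClosedSubset C)
    (hnil : [] ∉ C) : ∃ W : ℕ → A, ∀ n, initSeg W n ∉ C := by
  have hstep : ∀ w : {w : List A // w ∉ C}, ∃ a, a :: w.1 ∉ C := fun w => by
    by_contra! h
    exact w.2 (hC.2 w.1 h)
  choose g hg using hstep
  let f : ℕ → {w : List A // w ∉ C} := fun n =>
    Nat.rec ⟨[], hnil⟩ (fun _ w => ⟨g w :: w.1, hg w⟩) n
  have hf : ∀ n, initSeg (fun k => g (f k)) n = (f n).1 := by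
    intro n
    induction n with
    | zero => rfl
    | succ n ih => rw [initSeg, ih]
  exact ⟨fun k => g (f k), fun n => hf n ▸ (f n).2⟩

end

theorem stmt_5_general {A : Type*} (I : Set (List A)) :
    IsDenseIdeal I ↔ ∀ W : ℕ → A, ∃ n : ℕ, initSeg W n ∈ I := by
  constructor
  · intro hdense W
    by_contra! hW
    have hIC : I ⊆ (Set.range (initSeg W))ᶜ := fun w hw ⟨n, hn⟩ => hW n (hn ▸ hw)
    have hnil : [] ∈ (Set.range (initSeg W))ᶜ :=
      hdense _ (isClosedSubset_compl_range_initSeg W) hIC ▸ Set.mem_univ _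
    exact hnil ⟨0, rfl⟩
  · intro h C hC hIC
    refine hC.1.eq_univ_of_nil_mem (by_contra fun hnil => ?_)
    obtain ⟨W, hW⟩ := hC.exists_forall_initSeg_notMem hnil
    obtain ⟨n, hn⟩ := h W
    exact hW n (hIC hn)

/-- A left ideal `I ≤ A*` is dense iff every infinite word has an initial segment in `I`. -/
theorem stmt_5 {A : Type*} (I : Set (List A)) (hI : IsLeftIdeal I) :
    IsDenseIdeal I ↔ ∀ W : ℕ → A, ∃ n : ℕ, initSeg W n ∈ I :=
  stmt_5_general I
end

section
/- Let A be a finite set. For a left ideal I of the free monoid A*, the following are equivalent: (a) I is dense; (b) there exists n ∈ ℕ such that every word of length n belongs to I; (c) the complement A* ∖ I is finite. -/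
lemma mem_of_length_ge {A : Type*} {I : Set (List A)} (hI : IsLeftIdeal I) {n : ℕ}
    (hn : ∀ w : List A, w.length = n → w ∈ I) :
    ∀ w : List A, n ≤ w.length → w ∈ I := by
  intro w hw
  have h := List.take_append_drop (w.length - n) w
  rw [← h]
  exact hI _ _ (hn _ (by rw [List.length_drop]; omega))

/-- For a left ideal `I` of `A*` with `A` finite, TFAE: (a) `I` is dense; (b) for some `n`,
every word of length `n` is in `I`; (c) the complement of `I` is finite. -/
theorem stmt_7 {A : Type*} [Finite A] (I : Set (List A)) (hI : IsLeftIdeal I) :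
    List.TFAE [IsDenseIdeal I,
      ∃ n : ℕ, ∀ w : List A, w.length = n → w ∈ I,
      (Iᶜ : Set (List A)).Finite] := by
  tfae_have 1 → 2 := by
    intro hd
    by_cases hA : Nonempty A
    · set C : Set (List A) := {w | ∃ n, ∀ u : List A, n ≤ u.length → u ++ w ∈ I} with hC
      have hCclosed : IsClosedSubset C := by
        constructor
        · rintro u w ⟨n, hn⟩
          refine ⟨n, fun v hv => ?_⟩
          rw [← List.append_assoc]
          exact hn (v ++ u) (by simp; omega)
        · intro w hw
          haveI := Fintype.ofFinite A
          choose f hf using hw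
          refine ⟨(Finset.univ.sup f) + 1, fun u hu => ?_⟩
          obtain ⟨u', a, rfl⟩ : ∃ u' a, u = u' ++ [a] := by
            cases u using List.reverseRecOn with
            | nil => simp at hu
            | append_singleton u' a _ => exact ⟨u', a, rfl⟩
          rw [List.append_assoc]
          refine hf a u' ?_
          have h1 : f a ≤ Finset.univ.sup f := Finset.le_sup (Finset.mem_univ a)
          have h2 : Finset.univ.sup f + 1 ≤ u'.length + 1 := by simpa using hu
          omega
      have hIC : I ⊆ C := fun w hw => ⟨0, fun u _ => hI u w hw⟩
      have huniv := hd C hCclosed hIC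
      have hnil : ([] : List A) ∈ C := huniv ▸ Set.mem_univ _
      obtain ⟨n, hn⟩ := hnil
      exact ⟨n, fun w hw => by simpa using hn w (by omega)⟩
    · refine ⟨1, fun w hw => ?_⟩
      exact absurd ⟨w.head (by intro h; subst h; simp at hw)⟩ hA
  tfae_have 2 → 3 := by
    rintro ⟨n, hn⟩
    refine (List.finite_length_lt A n).subset fun w hw => ?_
    by_contra hlt
    simp only [Set.mem_setOf_eq, not_lt] at hlt
    exact hw (mem_of_length_ge hI hn w hlt)
  tfae_have 3 → 2 := by
    intro hfin
    refine ⟨hfin.toFinset.sup List.length + 1, fun w hw => ?_⟩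
    by_contra hwI
    have : w ∈ hfin.toFinset := hfin.mem_toFinset.mpr hwI
    have := Finset.le_sup (f := List.length) this
    omega
  tfae_have 2 → 1 := by
    rintro ⟨n, hn⟩ C hC hIC
    have key : ∀ k (w : List A), n ≤ w.length + k → w ∈ C := by
      intro k
      induction k with
      | zero => intro w hw; exact hIC (mem_of_length_ge hI hn w (by omega))
      | succ k ih =>
        intro w hw
        exact hC.2 w fun a => ih (a :: w) (by simp; omega)
    exact Set.eq_univ_of_forall fun w => key n w (by omega)
  tfae_finish
end

section
/- Let A be a finite nonempty set and I ⊆ A* a closed left ideal which is finitely generated as a left ideal (i.e. I = {u g : u ∈ A*, g ∈ G} for some finite G ⊆ A*). Then there exists a unique closed left ideal I′ ⊆ A* such that I ∩ I′ = ∅ and the left ideal I ∪ I′ is dense; moreover this I′ is also finitely generated as a left ideal. -/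
/-- A subset of `A*` is finitely generated as a left ideal if it is the set of all words
`u ++ g` with `g` in some finite set `G`. -/
def IsFinGenIdeal {A : Type*} (I : Set (List A)) : Prop :=
  ∃ G : Finset (List A), I = {w : List A | ∃ u : List A, ∃ g ∈ G, w = u ++ g}

private lemma stmt8_suffix_helper {A : Type*} {u w v g : List A} (h : u ++ w = v ++ g)
    (hlen : g.length ≤ w.length) : ∃ w', w = w' ++ g := by
  have hg : g <:+ u ++ w := h ▸ List.suffix_append v g
  have hw : w <:+ u ++ w := List.suffix_append u w
  have hgw : g <:+ w := by
    rw [← List.reverse_prefix] at hg hw ⊢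
    exact List.prefix_of_prefix_length_le hg hw (by simpa using hlen)
  obtain ⟨w', rfl⟩ := hgw
  exact ⟨w', rfl⟩

/-- If `A` is finite and nonempty and `I ≤ A*` is a finitely generated closed left ideal,
then there is a unique closed left ideal `I'` with `I ∩ I' = ∅` and `I ∪ I'` dense;
moreover this `I'` is finitely generated. -/
theorem stmt_8 {A : Type*} [Finite A] [Nonempty A] (I : Set (List A))
    (hIc : IsClosedSubset I) (hIfg : IsFinGenIdeal I) :
    ∃ I' : Set (List A),
      (IsClosedSubset I' ∧ I ∩ I' = ∅ ∧ IsDenseIdeal (I ∪ I') ∧ IsFinGenIdeal I') ∧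
      ∀ J : Set (List A), IsClosedSubset J → I ∩ J = ∅ → IsDenseIdeal (I ∪ J) → J = I' := by
  
  classical
  obtain ⟨G, hG⟩ := hIfg
  set D : Set (List A) := {w : List A | ∀ u : List A, u ++ w ∉ I} with hD
  set L : ℕ := G.sup List.length with hL
  have hglen : ∀ g ∈ G, g.length ≤ L := fun g hg => Finset.le_sup (f := List.length) hg
  -- D is a left ideal
  have hDli : IsLeftIdeal D := by
    intro u w hw v
    rw [← List.append_assoc]
    exact hw (v ++ u)
  -- D is closed
  have hDc : IsClosedSubset D := by
    refine ⟨hDli, ?_⟩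
    intro w hAll u hu
    rcases u.eq_nil_or_concat with rfl | ⟨u', a, rfl⟩
    · simp only [List.nil_append] at hu
      obtain ⟨a⟩ := ‹Nonempty A›
      exact hAll a [] (by simpa using hIc.1 [a] w hu)
    · have : u' ++ (a :: w) ∈ I := by simpa using hu
      exact hAll a u' this
  -- disjointness
  have hdisj : I ∩ D = ∅ := by
    ext w
    simp only [Set.mem_inter_iff, Set.mem_empty_iff_false, iff_false, not_and]
    intro hwI hwD
    exact hwD [] (by simpa using hwI)
  -- long words are in I ∪ D
  have hlong : ∀ w : List A, L ≤ w.length → w ∈ I ∪ D := by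
    intro w hw
    by_cases hwI : w ∈ I
    · exact Or.inl hwI
    · refine Or.inr (fun u hu => ?_)
      rw [hG] at hu
      obtain ⟨v, g, hgG, hvg⟩ := hu
      obtain ⟨w', rfl⟩ := stmt8_suffix_helper hvg ((hglen g hgG).trans hw)
      exact hwI (hG ▸ ⟨w', g, hgG, rfl⟩)
  -- density
  have hdense : IsDenseIdeal (I ∪ D) := by
    intro C hC hsub
    have key : ∀ n : ℕ, ∀ w : List A, L ≤ w.length + n → w ∈ C := by
      intro n
      induction n with
      | zero => intro w hw; exact hsub (hlong w (by simpa using hw))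
      | succ n ih =>
        intro w hw
        by_cases h : L ≤ w.length
        · exact hsub (hlong w h)
        · exact hC.2 w (fun a => ih (a :: w) (by simp; omega))
    ext w
    simp only [Set.mem_univ, iff_true]
    exact key L w (by omega)
  -- D is finitely generated
  have hDfg : IsFinGenIdeal D := by
    have hfin : ({w : List A | w.length ≤ L} ∩ D).Finite :=
      (List.finite_length_le A L).inter_of_left D
    refine ⟨hfin.toFinset, ?_⟩
    ext w
    simp only [Set.mem_setOf_eq, Set.Finite.mem_toFinset, Set.mem_inter_iff]
    constructor
    · intro hwD
      by_cases h : w.length ≤ L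
      · exact ⟨[], w, ⟨h, hwD⟩, by simp⟩
      · push_neg at h
        refine ⟨w.take (w.length - L), w.drop (w.length - L), ⟨?_, ?_⟩, (List.take_append_drop _ w).symm⟩
        · simp; omega
        · have hwg : w.take (w.length - L) ++ w.drop (w.length - L) = w :=
            List.take_append_drop _ w
          have hglen' : (w.drop (w.length - L)).length = L := by simp; omega
          intro u hu
          rw [hG] at hu
          obtain ⟨v, h', hh'G, hvh⟩ := hu
          obtain ⟨g', hgg'⟩ := stmt8_suffix_helper hvh ((hglen h' hh'G).trans hglen'.ge)
          refine hwD [] ?_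
          rw [List.nil_append, hG]
          refine ⟨w.take (w.length - L) ++ g', h', hh'G, ?_⟩
          rw [List.append_assoc, ← hgg', hwg]
    · rintro ⟨u, g, ⟨-, hgD⟩, rfl⟩
      exact hDli u g hgD
  refine ⟨D, ⟨hDc, hdisj, hdense, hDfg⟩, ?_⟩
  -- uniqueness
  intro J hJc hJdisj hJdense
  apply Set.eq_of_subset_of_subset
  · intro w hwJ u
    intro huI
    have : u ++ w ∈ I ∩ J := ⟨huI, hJc.1 u w hwJ⟩
    rw [hJdisj] at this
    exact this
  · -- D ⊆ J
    set C : Set (List A) := {v : List A | ∀ u : List A, u ++ v ∈ D → u ++ v ∈ J} with hC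
    have hCc : IsClosedSubset C := by
      constructor
      · intro t v hv u
        rw [← List.append_assoc]
        exact hv (u ++ t)
      · intro v hAll u hu
        rcases u.eq_nil_or_concat with rfl | ⟨u', a, rfl⟩
        · simp only [List.nil_append] at hu ⊢
          refine hJc.2 v (fun a => ?_)
          have : [] ++ (a :: v) ∈ D := by simpa using hDli [a] v hu
          simpa using hAll a [] this
        · simp only [List.concat_eq_append, List.append_assoc, List.singleton_append] at hu ⊢
          exact hAll a u' hu
    have hCuniv : C = Set.univ := by
      refine hJdense C hCc ?_
      rintro v (hvI | hvJ)
      · intro u hu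
        exact absurd (hIc.1 u v hvI) (by simpa using hu [])
      · intro u _
        exact hJc.1 u v hvJ
    intro w hwD
    have : w ∈ C := hCuniv ▸ Set.mem_univ w
    simpa using this [] (by simpa using hwD)
end

section
/- Let A be a finite set, X and Y left A*-sets with Y separated, and (U, f) : X → Y a dense partial map. Let G′ be the closure in X × Y of the graph {(x, f(x)) : x ∈ U}. Then U′ = {x ∈ X : ∃ y ∈ Y, (x, y) ∈ G′} is a dense sub-A*-set of X containing U, and G′ is the graph of an A*-equivariant map f′ : U′ → Y with f′(x) = f(x) for all x ∈ U. Moreover, if (V, g) : X → Y is a dense partial map with U ⊆ V and g(x) = f(x) for all x ∈ U, then the closure in X × Y of the graph of g equals G′. -/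
/-- A subset of a left `A*`-set (given by its generating actions `act a`) is a sub-`A*`-set
if it is stable under the action. -/
def IsSubAct {A X : Type*} (act : A → X → X) (U : Set X) : Prop :=
  ∀ (a : A) (x : X), x ∈ U → act a x ∈ U

/-- A sub-`A*`-set `U` is closed if `x ∈ U` whenever `a · x ∈ U` for every `a ∈ A`. -/
def IsClosedSub {A X : Type*} (act : A → X → X) (U : Set X) : Prop :=
  IsSubAct act U ∧ ∀ x : X, (∀ a : A, act a x ∈ U) → x ∈ U

/-- The closure of `U`: the smallest closed sub-`A*`-set containing `U`. -/
def closureSub {A X : Type*} (act : A → X → X) (U : Set X) : Set X :=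
  ⋂₀ {C : Set X | IsClosedSub act C ∧ U ⊆ C}

/-- `U` is dense if its closure is everything. -/
def IsDenseSub {A X : Type*} (act : A → X → X) (U : Set X) : Prop :=
  closureSub act U = Set.univ

/-- The componentwise action on a product. -/
def prodAct {A X Y : Type*} (actX : A → X → X) (actY : A → Y → Y) : A → X × Y → X × Y :=
  fun a p => (actX a p.1, actY a p.2)

section Aux
variable {A X Y : Type*}

/-- Action of a word (list of letters), head acting first. -/
def actW (act : A → X → X) : List A → X → X
  | [], x => x
  | a :: l, x => actW act l (act a x)

lemma actW_mem (act : A → X → X) {U : Set X} (hU : IsSubAct act U) :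
    ∀ (l : List A) {x : X}, x ∈ U → actW act l x ∈ U := by
  intro l
  induction l with
  | nil => intro x hx; exact hx
  | cons a l ih => intro x hx; exact ih (hU a x hx)

lemma subset_closureSub (act : A → X → X) (U : Set X) : U ⊆ closureSub act U :=
  fun _ hx _ hC => hC.2 hx

lemma closureSub_isClosed (act : A → X → X) (U : Set X) :
    IsClosedSub act (closureSub act U) := by
  constructor
  · intro a x hx C hC
    exact hC.1.1 a x (hx C hC)
  · intro x hx C hC
    exact hC.1.2 x (fun a => hx a C hC)

lemma closureSub_min (act : A → X → X) {U C : Set X} (hC : IsClosedSub act C)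
    (hUC : U ⊆ C) : closureSub act U ⊆ C :=
  fun _ hx => hx C ⟨hC, hUC⟩

lemma closureSub_mono (act : A → X → X) {U V : Set X} (h : U ⊆ V) :
    closureSub act U ⊆ closureSub act V :=
  closureSub_min act (closureSub_isClosed act V) (h.trans (subset_closureSub act V))

lemma closure_induction' (act : A → X → X) (S : Set X) (Q : X → Prop)
    (hS : ∀ x ∈ S, ∀ l, Q (actW act l x))
    (hcl : ∀ x, (∀ (a : A) (l : List A), Q (actW act l (act a x))) → Q x) :
    ∀ x ∈ closureSub act S, ∀ l, Q (actW act l x) := by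
  have h : closureSub act S ⊆ {x | ∀ l, Q (actW act l x)} := by
    apply closureSub_min
    · constructor
      · intro a x hx l
        exact hx (a :: l)
      · intro x hx l
        cases l with
        | nil => exact hcl x hx
        | cons a l => exact hx a l
    · exact hS
  exact fun x hx => h hx

lemma dense_induction (act : A → X → X) {U : Set X} (hsub : IsSubAct act U)
    (hdense : IsDenseSub act U) (Q : X → Prop)
    (hU : ∀ x ∈ U, Q x)
    (hcl : ∀ x, (∀ a : A, Q (act a x)) → Q x) :
    ∀ x, Q x := by
  intro x
  have h := closure_induction' act U Q
    (fun x hx l => hU _ (actW_mem act hsub l hx))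
    (fun x h => hcl x (fun a => h a []))
  have hx : x ∈ closureSub act U := by rw [hdense]; trivial
  exact h x hx []

lemma actW_prod (actX : A → X → X) (actY : A → Y → Y) :
    ∀ (l : List A) (p : X × Y),
      actW (prodAct actX actY) l p = (actW actX l p.1, actW actY l p.2) := by
  intro l
  induction l with
  | nil => intro p; rfl
  | cons a l ih => intro p; exact ih (prodAct actX actY a p)

lemma f_actW (actX : A → X → X) (actY : A → Y → Y) {U : Set X} (hUsub : IsSubAct actX U)
    (f : X → Y) (hf : ∀ (a : A), ∀ x ∈ U, f (actX a x) = actY a (f x)) :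
    ∀ (l : List A), ∀ x ∈ U, f (actW actX l x) = actW actY l (f x) := by
  intro l
  induction l with
  | nil => intro x _; rfl
  | cons a l ih =>
    intro x hx
    show f (actW actX l (actX a x)) = actW actY l (actY a (f x))
    rw [ih (actX a x) (hUsub a x hx), hf a x hx]

end Aux

/-- Maximal extension of a dense partial map `(U, f) : X → Y` into a separated `A*`-set `Y`:
the closure `G'` of the graph of `f` is the graph of an equivariant map `f'` defined on a
dense sub-`A*`-set `U' ⊇ U`, extending `f`; and any dense partial map `(V, g)` extending
`(U, f)` has the same graph closure `G'`. -/
theorem stmt_9 {A X Y : Type*} [Finite A]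
    (actX : A → X → X) (actY : A → Y → Y)
    (hsep : ∀ y y' : Y, (∀ a : A, actY a y = actY a y') → y = y')
    (U : Set X) (hUsub : IsSubAct actX U) (hUdense : IsDenseSub actX U)
    (f : X → Y) (hf : ∀ (a : A), ∀ x ∈ U, f (actX a x) = actY a (f x)) :
    ∀ G' : Set (X × Y),
      G' = closureSub (prodAct actX actY) {p : X × Y | p.1 ∈ U ∧ p.2 = f p.1} →
    ∀ U' : Set X, U' = {x : X | ∃ y : Y, (x, y) ∈ G'} →
      (U ⊆ U' ∧ IsSubAct actX U' ∧ IsDenseSub actX U' ∧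
       (∃ f' : X → Y,
          G' = {p : X × Y | p.1 ∈ U' ∧ p.2 = f' p.1} ∧
          (∀ (a : A), ∀ x ∈ U', f' (actX a x) = actY a (f' x)) ∧
          (∀ x ∈ U, f' x = f x)) ∧
       (∀ (V : Set X) (g : X → Y), IsSubAct actX V → IsDenseSub actX V →
          (∀ (a : A), ∀ x ∈ V, g (actX a x) = actY a (g x)) →
          U ⊆ V → (∀ x ∈ U, g x = f x) →
          closureSub (prodAct actX actY) {p : X × Y | p.1 ∈ V ∧ p.2 = g p.1} = G')) := by
  classical
  intro G' hG' U' hU'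
  set Γ : Set (X × Y) := {p : X × Y | p.1 ∈ U ∧ p.2 = f p.1} with hΓ
  have hGcl : IsClosedSub (prodAct actX actY) G' := by
    rw [hG']; exact closureSub_isClosed _ _
  have hΓG : Γ ⊆ G' := by rw [hG']; exact subset_closureSub _ _
  -- on U, G' agrees with f
  have hUf : ∀ p ∈ G', p.1 ∈ U → p.2 = f p.1 := by
    intro p hp
    have key := closure_induction' (prodAct actX actY) Γ
      (fun q => q.1 ∈ U → q.2 = f q.1)
      (by
        intro q hq l
        rw [actW_prod]
        intro _
        show actW actY l q.2 = f (actW actX l q.1)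
        rw [hq.2, f_actW actX actY hUsub f hf l q.1 hq.1])
      (by
        intro q hq hq1
        apply hsep
        intro a
        have h := hq a []
        have h2 : actY a q.2 = f (actX a q.1) := h (hUsub a q.1 hq1)
        rw [h2, hf a q.1 hq1])
      p (hG' ▸ hp) []
    exact key
  -- uniqueness of the second coordinate
  have huniq : ∀ x (y y' : Y), (x, y) ∈ G' → (x, y') ∈ G' → y = y' := by
    have := dense_induction actX hUsub hUdense
      (fun x => ∀ y y' : Y, (x, y) ∈ G' → (x, y') ∈ G' → y = y')
      (by
        intro x hx y y' h h'
        exact (hUf (x, y) h hx).trans (hUf (x, y') h' hx).symm)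
      (by
        intro x h y y' h1 h2
        apply hsep
        intro a
        exact h a (actY a y) (actY a y') (hGcl.1 a (x, y) h1) (hGcl.1 a (x, y') h2))
    exact this
  have hUU' : U ⊆ U' := by
    intro x hx
    rw [hU']
    exact ⟨f x, hΓG ⟨hx, rfl⟩⟩
  have hU'sub : IsSubAct actX U' := by
    intro a x hx
    rw [hU'] at hx ⊢
    obtain ⟨y, hy⟩ := hx
    exact ⟨actY a y, hGcl.1 a (x, y) hy⟩
  refine ⟨hUU', hU'sub, ?_, ?_, ?_⟩
  · -- density of U'
    exact Set.eq_univ_of_univ_subset (hUdense ▸ closureSub_mono actX hUU')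
  · -- the map f'
    set f' : X → Y := fun x => if h : ∃ y : Y, (x, y) ∈ G' then h.choose else f x with hf'
    have hmemG : ∀ x ∈ U', (x, f' x) ∈ G' := by
      intro x hx
      rw [hU'] at hx
      have : f' x = hx.choose := dif_pos hx
      rw [this]
      exact hx.choose_spec
    refine ⟨f', ?_, ?_, ?_⟩
    · ext p
      constructor
      · intro hp
        have h1 : p.1 ∈ U' := by rw [hU']; exact ⟨p.2, hp⟩
        exact ⟨h1, huniq p.1 p.2 (f' p.1) hp (hmemG p.1 h1)⟩
      · rintro ⟨h1, h2⟩
        have := hmemG p.1 h1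
        rwa [← h2] at this
    · intro a x hx
      have h1 : actX a x ∈ U' := hU'sub a x hx
      exact huniq (actX a x) (f' (actX a x)) (actY a (f' x)) (hmemG _ h1)
        (hGcl.1 a (x, f' x) (hmemG x hx))
    · intro x hx
      exact hUf (x, f' x) (hmemG x (hUU' hx)) hx
  · -- uniqueness of the closure
    intro V g hVsub hVdense hg hUV hgf
    have hΓgG : {p : X × Y | p.1 ∈ V ∧ p.2 = g p.1} ⊆ G' := by
      have key := dense_induction actX hUsub hUdense
        (fun x => x ∈ V → (x, g x) ∈ G')
        (by
          intro x hx _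
          exact hΓG ⟨hx, hgf x hx⟩)
        (by
          intro x h hxV
          apply hGcl.2
          intro a
          have := h a (hVsub a x hxV)
          show (actX a x, actY a (g x)) ∈ G'
          rwa [← hg a x hxV])
      rintro ⟨x, y⟩ ⟨h1, h2⟩
      have h2' : y = g x := h2
      rw [h2']
      exact key x h1
    apply subset_antisymm
    · exact closureSub_min _ hGcl hΓgG
    · rw [hG']
      apply closureSub_mono
      intro p hp
      exact ⟨hUV hp.1, by rw [hp.2, hgf p.1 hp.1]⟩
end

section
/- Let 𝔸 be a directed graph and u a vertex of 𝔸. Then the set J_u of all paths p ending at a vertex w for which there exists a finite path from u to w is an ideal, and J_u is dense if and only if u is cofinal. -/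
universe u v

/-- An ideal of paths in a quiver: closed under postcomposition. -/
def IsPathIdeal {V : Type u} [Quiver.{v+1} V] (I : Set (Σ a b : V, Quiver.Path a b)) : Prop :=
  ∀ (u v w : V) (p : Quiver.Path u v) (q : Quiver.Path v w),
    (⟨u, v, p⟩ : Σ a b : V, Quiver.Path a b) ∈ I →
    (⟨u, w, p.comp q⟩ : Σ a b : V, Quiver.Path a b) ∈ I

/-- A set of paths is closed if it is an ideal and contains `p` whenever it contains
`e p` for every edge `e` composable after `p`. -/
def IsPathClosed {V : Type u} [Quiver.{v+1} V] (C : Set (Σ a b : V, Quiver.Path a b)) : Prop :=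
  IsPathIdeal C ∧ ∀ (u v : V) (p : Quiver.Path u v),
    (∀ (w : V) (e : v ⟶ w), (⟨u, w, p.cons e⟩ : Σ a b : V, Quiver.Path a b) ∈ C) →
    (⟨u, v, p⟩ : Σ a b : V, Quiver.Path a b) ∈ C

/-- An ideal of paths is dense if the only closed set containing it is the set of all paths. -/
def IsPathDense {V : Type u} [Quiver.{v+1} V] (I : Set (Σ a b : V, Quiver.Path a b)) : Prop :=
  ∀ C : Set (Σ a b : V, Quiver.Path a b), IsPathClosed C → I ⊆ C → C = Set.univ

/-- A vertex `u` is cofinal if for every infinite path with vertices `v₀, v₁, v₂, …` there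
exist some `k` and a finite path from `u` to `v_k`. -/
def IsCofinalVertex {V : Type u} [Quiver.{v+1} V] (u : V) : Prop :=
  ∀ (vtx : ℕ → V) (_ : ∀ i : ℕ, vtx i ⟶ vtx (i + 1)),
    ∃ k : ℕ, Nonempty (Quiver.Path u (vtx k))

section Aux

variable {V : Type u} [Quiver.{v+1} V]

/-- Vertices reachable from `u`. -/
def ReachSet (u : V) : Set V := {v | Nonempty (Quiver.Path u v)}

/-- Vertices from which there is an infinite path avoiding `ReachSet u`. -/
def BadSet (u : V) : Set V :=
  {v | ∃ (w : ℕ → V) (_ : ∀ i : ℕ, w i ⟶ w (i + 1)), w 0 = v ∧ ∀ i, w i ∉ ReachSet u}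

lemma reach_succ (u : V) {a b : V} (h : a ∈ ReachSet u) (e : a ⟶ b) : b ∈ ReachSet u :=
  h.map (fun p => p.cons e)

lemma bad_not_reach (u : V) {a : V} (h : a ∈ BadSet u) : a ∉ ReachSet u := by
  obtain ⟨ws, ew, h0, hR⟩ := h
  exact h0 ▸ hR 0

lemma not_bad_succ (u : V) {a b : V} (ha : a ∉ BadSet u) (e : a ⟶ b) : b ∉ BadSet u := by
  intro hb
  by_cases haR : a ∈ ReachSet u
  · exact bad_not_reach u hb (reach_succ u haR e)
  · apply ha
    obtain ⟨ws, ew, h0, hR⟩ := hb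
    refine ⟨fun n => Nat.rec a (fun i _ => ws i) n, fun i => ?_, rfl, fun i => ?_⟩
    · cases i with
      | zero => exact show a ⟶ ws 0 from h0.symm ▸ e
      | succ i => exact ew i
    · cases i with
      | zero => exact haR
      | succ i => exact hR i

lemma not_bad_path (u : V) {a b : V} (q : Quiver.Path a b) (ha : a ∉ BadSet u) :
    b ∉ BadSet u := by
  induction q with
  | nil => exact ha
  | cons q e ih => exact not_bad_succ u ih e

lemma bad_exists_succ (u : V) {a : V} (h : a ∈ BadSet u) :
    ∃ b, ∃ _ : a ⟶ b, b ∈ BadSet u := by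
  obtain ⟨ws, ew, h0, hR⟩ := h
  exact ⟨ws 1, h0 ▸ ew 0, fun n => ws (n + 1), fun i => ew (i + 1), rfl, fun i => hR (i + 1)⟩

end Aux

/-- The set `J_u` of paths ending at a vertex reachable from `u` is an ideal, and it is
dense iff `u` is cofinal. -/
theorem stmt_13 {V : Type u} [Quiver.{v+1} V] (u : V) :
    IsPathIdeal {p : Σ a b : V, Quiver.Path a b | Nonempty (Quiver.Path u p.2.1)} ∧
    (IsPathDense {p : Σ a b : V, Quiver.Path a b | Nonempty (Quiver.Path u p.2.1)} ↔
      IsCofinalVertex u) := by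
  classical
  refine ⟨fun a b c p q hp => hp.map (fun h => h.comp q), ?_, ?_⟩
  · -- dense → cofinal
    intro hd vtx edges
    by_contra hno
    have hR : ∀ k, vtx k ∉ ReachSet u := fun k h => hno ⟨k, h⟩
    have hbad : vtx 0 ∈ BadSet u := ⟨vtx, edges, rfl, hR⟩
    have hC : IsPathClosed {p : Σ a b : V, Quiver.Path a b | p.2.1 ∉ BadSet u} := by
      constructor
      · intro a b c p q hp
        exact not_bad_path u q hp
      · intro a b p hp hb
        obtain ⟨w, e, hw⟩ := bad_exists_succ u hb
        exact hp w e hw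
    have huniv := hd _ hC (fun x hx hbx => bad_not_reach u hbx hx)
    have hmem : (⟨vtx 0, vtx 0, Quiver.Path.nil⟩ : Σ a b : V, Quiver.Path a b) ∈
        {p : Σ a b : V, Quiver.Path a b | p.2.1 ∉ BadSet u} := huniv ▸ Set.mem_univ _
    exact hmem hbad
  · -- cofinal → dense
    intro hcof C hC hsub
    ext x
    simp only [Set.mem_univ, iff_true]
    by_contra hx
    obtain ⟨a, b, p⟩ := x
    have hex : ∀ (s : Σ' w : V, Σ' q : Quiver.Path a w,
        (⟨a, w, q⟩ : Σ a b : V, Quiver.Path a b) ∉ C),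
        ∃ w', ∃ e : s.1 ⟶ w',
          (⟨a, w', s.2.1.cons e⟩ : Σ a b : V, Quiver.Path a b) ∉ C := by
      rintro ⟨w, q, hq⟩
      by_contra h
      push_neg at h
      exact hq (hC.2 a w q h)
    choose nxt edg hnxt using hex
    let f : ℕ → Σ' w : V, Σ' q : Quiver.Path a w,
        (⟨a, w, q⟩ : Σ a b : V, Quiver.Path a b) ∉ C :=
      fun n => Nat.rec ⟨b, p, hx⟩ (fun _ s => ⟨nxt s, s.2.1.cons (edg s), hnxt s⟩) n
    obtain ⟨k, ⟨pk⟩⟩ := hcof (fun n => (f n).1) (fun n => edg (f n))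
    exact (f k).2.2 (hsub ⟨pk⟩)
end

section
/- Let B be a Boolean algebra with 0 ≠ 1 and X a B-set. For b ∈ B define x ≡_b y iff b(x, y) = y. Then: each ≡_b is an equivalence relation on X; if c ≤ b and x ≡_b y then x ≡_c y; x ≡_1 y iff x = y; x ≡_0 y for all x, y; if x ≡_b y and x ≡_c y then x ≡_{b ∨ c} y; and for all b ∈ B and x, y ∈ X, the element b(x, y) is the unique z ∈ X with z ≡_b x and z ≡_{b′} y. -/
/-- For a `B`-set `X` over a nondegenerate Boolean algebra `B` (operation
`op : B → X → X → X` satisfying the `B`-set axioms), defining `x ≡_b y` iff `b(x,y) = y`: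
each `≡_b` is an equivalence relation; `≡` is antitone in `b`; `≡_1` is equality; `≡_0` is
total; `x ≡_b y` and `x ≡_c y` imply `x ≡_{b ⊔ c} y`; and `b(x,y)` is the unique `z` with
`z ≡_b x` and `z ≡_{bᶜ} y`. -/
theorem stmt_14 {B : Type*} [BooleanAlgebra B] (h01 : (⊥ : B) ≠ ⊤)
    {X : Type*} (op : B → X → X → X)
    (hrefl : ∀ (b : B) (x : X), op b x x = x)
    (hassoc₁ : ∀ (b : B) (x y z : X), op b (op b x y) z = op b x z)
    (hassoc₂ : ∀ (b : B) (x y z : X), op b x (op b y z) = op b x z)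
    (htop : ∀ x y : X, op ⊤ x y = x)
    (hcompl : ∀ (b : B) (x y : X), op bᶜ x y = op b y x)
    (hinf : ∀ (b c : B) (x y : X), op (b ⊓ c) x y = op b (op c x y) y) :
    (∀ b : B, Equivalence (fun x y : X => op b x y = y)) ∧
    (∀ (b c : B) (x y : X), c ≤ b → op b x y = y → op c x y = y) ∧
    (∀ x y : X, op ⊤ x y = y ↔ x = y) ∧
    (∀ x y : X, op ⊥ x y = y) ∧
    (∀ (b c : B) (x y : X), op b x y = y → op c x y = y → op (b ⊔ c) x y = y) ∧
    (∀ (b : B) (x y : X),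
      (op b (op b x y) x = x ∧ op bᶜ (op b x y) y = y) ∧
      ∀ z : X, op b z x = x → op bᶜ z y = y → z = op b x y) := by
  refine ⟨?_, ?_, ?_, ?_, ?_, ?_⟩
  · intro b
    refine ⟨fun x => hrefl b x, fun {x y} h => ?_, fun {x y z} h1 h2 => ?_⟩
    · conv_lhs => rw [← h, hassoc₁, hrefl]
    · conv_rhs => rw [← h2, ← h1, hassoc₁]
  · intro b c x y hcb h
    have : c = c ⊓ b := (inf_eq_left.mpr hcb).symm
    rw [this, hinf, h, hrefl]
  · intro x y
    constructor
    · intro h; rw [← h, htop]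
    · intro h; rw [h, hrefl]
  · intro x y
    have : (⊥ : B) = ⊤ᶜ := by simp
    rw [this, hcompl, htop]
  · intro b c x y hb hc
    have : b ⊔ c = (bᶜ ⊓ cᶜ)ᶜ := by simp
    rw [this, hcompl, hinf, hcompl, hcompl, hc, hb]
  · intro b x y
    refine ⟨⟨by rw [hassoc₁, hrefl], by rw [hcompl, hassoc₂, hrefl]⟩, ?_⟩
    intro z h1 h2
    rw [hcompl] at h2
    calc z = op b z z := (hrefl b z).symm
    _ = op b z (op b y z) := by rw [hassoc₂]
    _ = op b z y := by rw [h2]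
    _ = op b (op b z x) y := by rw [hassoc₁]
    _ = op b x y := by rw [h1]
end

section
/- Given a self-similar action of a monoid P on a set A, the set P × A*, equipped with the multiplication (x, w)·(p, u) = (x·(p|_w), (w ⋆ p)u) (where the second component is concatenation of words) and unit (1, ε), is a monoid (the Zappa–Szép product P ⋈ A*). -/
/-- The extension of the restriction maps of a self-similar action to finite words:
`p|_ε = p` and `p|_{a w} = (p|_w)|_a` (words as lists, leftmost letter first). -/
def wres {P A : Type*} (res : P → A → P) : P → List A → P
  | p, [] => p
  | p, a :: w => res (wres res p w) a

/-- The extension of the action maps of a self-similar action to finite words: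
`ε ⋆ p = ε` and `(a w) ⋆ p = (a ⋆ p|_w)(w ⋆ p)`. -/
def wstar {P A : Type*} (star : A → P → A) (res : P → A → P) : List A → P → List A
  | [], _ => []
  | a :: w, p => star a (wres res p w) :: wstar star res w p

/-- The Zappa–Szép multiplication `(x, w)·(p, u) = (x (p|_w), (w ⋆ p) u)` on `P × A*`. -/
def zmul {P A : Type*} [Monoid P] (star : A → P → A) (res : P → A → P) :
    P × List A → P × List A → P × List A :=
  fun x y => (x.1 * wres res y.1 x.2, wstar star res x.2 y.1 ++ y.2)

variable {P : Type*} [Monoid P] {A : Type*} in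
lemma wres_one (res : P → A → P) (hres_one : ∀ a : A, res 1 a = 1) :
    ∀ w : List A, wres res 1 w = 1
  | [] => rfl
  | a :: w => by rw [wres, wres_one res hres_one w, hres_one]

variable {P : Type*} [Monoid P] {A : Type*} in
lemma wstar_one (star : A → P → A) (res : P → A → P)
    (hstar_one : ∀ a : A, star a 1 = a) (hres_one : ∀ a : A, res 1 a = 1) :
    ∀ w : List A, wstar star res w 1 = w
  | [] => rfl
  | a :: w => by
      rw [wstar, wres_one res hres_one w, hstar_one,
        wstar_one star res hstar_one hres_one w]

variable {P : Type*} [Monoid P] {A : Type*} in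
lemma wres_mul (star : A → P → A) (res : P → A → P)
    (hres_mul : ∀ (p q : P) (a : A), res (p * q) a = res p a * res q (star a p)) :
    ∀ (w : List A) (p q : P),
      wres res (p * q) w = wres res p w * wres res q (wstar star res w p)
  | [], _, _ => rfl
  | a :: w, p, q => by
      simp only [wres, wstar, wres_mul star res hres_mul w p q, hres_mul]

variable {P : Type*} [Monoid P] {A : Type*} in
lemma wstar_mul (star : A → P → A) (res : P → A → P)
    (hres_mul : ∀ (p q : P) (a : A), res (p * q) a = res p a * res q (star a p))
    (hstar_mul : ∀ (a : A) (p q : P), star a (p * q) = star (star a p) q) :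
    ∀ (w : List A) (p q : P),
      wstar star res w (p * q) = wstar star res (wstar star res w p) q
  | [], _, _ => rfl
  | a :: w, p, q => by
      simp only [wstar, wres, wres_mul star res hres_mul w p q, hstar_mul,
        wstar_mul star res hres_mul hstar_mul w p q]

variable {P : Type*} {A : Type*} in
lemma wres_append (res : P → A → P) : ∀ (w u : List A) (p : P),
    wres res p (w ++ u) = wres res (wres res p u) w
  | [], _, _ => rfl
  | a :: w, u, p => by rw [List.cons_append, wres, wres_append res w u p, wres]

variable {P : Type*} {A : Type*} in
lemma wstar_append (star : A → P → A) (res : P → A → P) : ∀ (w u : List A) (p : P),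
    wstar star res (w ++ u) p = wstar star res w (wres res p u) ++ wstar star res u p
  | [], _, _ => rfl
  | a :: w, u, p => by
      rw [List.cons_append, wstar, wstar_append star res w u p, wres_append res w u p, wstar,
        List.cons_append]


/-- Given a self-similar action of a monoid `P` on a set `A`, the set `P × A*` with the
Zappa–Szép multiplication and unit `(1, ε)` is a monoid. -/
theorem stmt_16 {P : Type*} [Monoid P] {A : Type*}
    (star : A → P → A) (res : P → A → P)
    (hstar_one : ∀ a : A, star a 1 = a)
    (hstar_mul : ∀ (a : A) (p q : P), star a (p * q) = star (star a p) q)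
    (hres_one : ∀ a : A, res 1 a = 1)
    (hres_mul : ∀ (p q : P) (a : A), res (p * q) a = res p a * res q (star a p)) :
    (∀ x : P × List A, zmul star res ((1 : P), ([] : List A)) x = x) ∧
    (∀ x : P × List A, zmul star res x ((1 : P), ([] : List A)) = x) ∧
    (∀ x y z : P × List A,
      zmul star res (zmul star res x y) z = zmul star res x (zmul star res y z)) := by
  refine ⟨?_, ?_, ?_⟩
  · rintro ⟨p, w⟩
    simp [zmul, wres, wstar, one_mul]
  · rintro ⟨p, w⟩
    simp [zmul, wres_one res hres_one, wstar_one star res hstar_one hres_one]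
  · rintro ⟨x1, x2⟩ ⟨y1, y2⟩ ⟨z1, z2⟩
    simp only [zmul, Prod.mk.injEq]
    constructor
    · rw [wres_append res, wres_mul star res hres_mul, mul_assoc]
    · rw [wstar_append star res, wstar_mul star res hres_mul hstar_mul, List.append_assoc]
end

section
/- Let ⟨B_𝒥, M⟩ be a Grothendieck matched pair of algebras and X a B_𝒥-set. Then for every m ∈ M and b ∈ B the relation ≡ᵐ_b is an equivalence relation on X, and: (i) if x ≡_b y then x ≡ᵐ_{m*b} y; (ii) if x ≡ᵐ_b y and c ≤ b then x ≡ᵐ_c y; (iii) if P ∈ 𝒥_b and x ≡ᵐ_c y for all c ∈ P, then x ≡ᵐ_b y; (iv) if x ≡ᵐ_b y then x ≡^{nm}_{n*b} y for every n ∈ M; (v) if X is moreover a ⟨B_𝒥, M⟩-set and x ≡ᵐ_b y, then m·x ≡_b m·y; (vi) if m ≡_b n in M, then for every c ≤ b and all x, y ∈ X: x ≡ᵐ_c y if and only if x ≡ⁿ_c y. -/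
/-- `P` is a partition of `b`: a set of pairwise-disjoint nonzero elements with
supremum `b`. -/
def IsPartitionOf {B : Type*} [BooleanAlgebra B] (P : Set B) (b : B) : Prop :=
  (⊥ : B) ∉ P ∧ (∀ c ∈ P, ∀ d ∈ P, c ≠ d → c ⊓ d = ⊥) ∧ IsLUB P b

/-- A zero-dimensional topology on a Boolean algebra `B`: a set `J` of partitions of `⊤`
containing every finite partition of `⊤`, closed under refinement, and closed under
taking joins over the blocks of any partition of a member. -/
structure ZeroDimTopology (B : Type*) [BooleanAlgebra B] where
  J : Set (Set B)
  partitionOf_mem : ∀ P ∈ J, IsPartitionOf P (⊤ : B)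
  finite_mem : ∀ P : Set B, P.Finite → IsPartitionOf P (⊤ : B) → P ∈ J
  refine_mem : ∀ P ∈ J, ∀ Q : B → Set B, (∀ b ∈ P, Q b ∈ J) →
    {x : B | x ≠ ⊥ ∧ ∃ b ∈ P, ∃ c ∈ Q b, x = b ⊓ c} ∈ J
  quot_mem : ∀ P ∈ J, ∀ S : Set (Set B),
    (∀ T ∈ S, T.Nonempty ∧ T ⊆ P) →
    (∀ T ∈ S, ∀ T' ∈ S, T ≠ T' → T ∩ T' = ∅) →
    ⋃₀ S = P →
    (∀ T ∈ S, ∃ x : B, IsLUB T x) ∧ {x : B | ∃ T ∈ S, IsLUB T x} ∈ J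

/-- `P ∈ 𝒥_b`: `P` is a partition of `b` contained in some member of `𝒥`. -/
def MemJAt {B : Type*} [BooleanAlgebra B] (Z : ZeroDimTopology B) (P : Set B) (b : B) :
    Prop :=
  IsPartitionOf P b ∧ ∃ Q ∈ Z.J, P ⊆ Q

/-- A `B_𝒥`-set: a set `X` with equivalence relations `≡_b` (`b ∈ B`) satisfying the
`B_𝒥`-set axioms. -/
structure BJSet {B : Type*} [BooleanAlgebra B] (Z : ZeroDimTopology B) (X : Type*) where
  rel : B → X → X → Prop
  equiv : ∀ b : B, Equivalence (rel b)
  mono : ∀ (b c : B) (x y : X), c ≤ b → rel b x y → rel c x y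
  rel_top : ∀ x y : X, rel ⊤ x y ↔ x = y
  rel_bot : ∀ x y : X, rel ⊥ x y
  glue : ∀ (b : B) (P : Set B), MemJAt Z P b →
    ∀ x y : X, (∀ c ∈ P, rel c x y) → rel b x y
  patch : ∀ P ∈ Z.J, ∀ xs : B → X, ∃ z : X, ∀ b ∈ P, rel b z (xs b)

/-- A `𝒥`-closed ideal of `B`: an ideal containing `b` whenever it contains some
`P ∈ 𝒥_b`. -/
def IsJClosedIdeal {B : Type*} [BooleanAlgebra B] (Z : ZeroDimTopology B) (I : Set B) :
    Prop :=
  (⊥ : B) ∈ I ∧ (∀ b c : B, b ≤ c → c ∈ I → b ∈ I) ∧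
    (∀ b c : B, b ∈ I → c ∈ I → b ⊔ c ∈ I) ∧
    ∀ (b : B) (P : Set B), MemJAt Z P b → P ⊆ I → b ∈ I

/-- A Grothendieck matched pair of algebras `⟨B_𝒥, M⟩`: a `B_𝒥`-set structure on the
monoid `M` together with an action of `M` on `B` by Grothendieck Boolean homomorphisms,
satisfying the matched pair axioms. -/
structure MatchedPair {B : Type*} [BooleanAlgebra B] (Z : ZeroDimTopology B)
    (M : Type*) [Monoid M] extends BJSet Z M where
  act : M → B → B
  act_inf : ∀ (m : M) (b c : B), act m (b ⊓ c) = act m b ⊓ act m c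
  act_sup : ∀ (m : M) (b c : B), act m (b ⊔ c) = act m b ⊔ act m c
  act_compl : ∀ (m : M) (b : B), act m bᶜ = (act m b)ᶜ
  act_top : ∀ m : M, act m ⊤ = ⊤
  act_bot : ∀ m : M, act m ⊥ = ⊥
  act_J : ∀ m : M, ∀ P ∈ Z.J, {x : B | x ≠ ⊥ ∧ ∃ c ∈ P, x = act m c} ∈ Z.J
  act_one : ∀ b : B, act 1 b = b
  act_mul : ∀ (m n : M) (b : B), act (m * n) b = act m (act n b)
  rel_mul_right : ∀ (b : B) (m n p : M), rel b m n → rel b (m * p) (n * p)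
  rel_mul_left : ∀ (b : B) (m n p : M), rel b n p → rel (act m b) (m * n) (m * p)
  rel_act : ∀ (b c : B) (m n : M), rel b m n → b ⊓ act m c = b ⊓ act n c

/-- `x ≡ᵐ_b y`: `b` belongs to the smallest `𝒥`-closed ideal of `B` containing all `m*c`
for `c` with `x ≡_c y`. -/
def relM {B : Type*} [BooleanAlgebra B] {Z : ZeroDimTopology B} {M : Type*} [Monoid M]
    {X : Type*} (MP : MatchedPair Z M) (S : BJSet Z X) (m : M) (b : B) (x y : X) : Prop :=
  ∀ I : Set B, IsJClosedIdeal Z I → (∀ c : B, S.rel c x y → MP.act m c ∈ I) → b ∈ I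


/-!
`x ≡ᵐ_b y` says that `b` lies in every `𝒥`-closed ideal containing the generators `m*c` with
`x ≡_c y`, so each property comes down to exhibiting a suitable `𝒥`-closed ideal: the ideal
`{c | x ≡_c y}` of a `B_𝒥`-set, preimages of a `𝒥`-closed ideal under `a ⊓ ·` (refine by the
finite partition `{a, aᶜ}`) and under `n*`, and intersections of these. A Boolean homomorphism
need not preserve infinite joins, but `n*` maps a `𝒥_b`-partition `P ⊆ Q ∈ 𝒥` to a
`𝒥_{n*b}`-partition because `n*` sends `Q` to a member of `𝒥`, whose join is `⊤`, and the blocks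
of `Q` outside `P` to elements disjoint from `n*b`. Transitivity comes from
`x ≡ᵐ_b y`, `y ≡ᵐ_c z` ⟹ `x ≡ᵐ_{b ⊓ c} z`, as `m*c ⊓ m*d = m*(c ⊓ d)` and `x ≡_{c ⊓ d} z`
whenever `x ≡_c y` and `y ≡_d z`.
-/

section Lattice

variable {B : Type*} {P Q : Set B} {b : B}

lemma upperBounds_sdiff_bot [Preorder B] [OrderBot B] (P : Set B) :
    upperBounds (P \ {⊥}) = upperBounds P := by
  refine Set.Subset.antisymm (fun u hu c hc => ?_) (upperBounds_mono_set Set.sdiff_subset)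
  by_cases hc0 : c = ⊥
  · exact hc0 ▸ bot_le
  · exact hu ⟨hc, hc0⟩

lemma isLUB_sdiff_bot_iff [Preorder B] [OrderBot B] : IsLUB (P \ {⊥}) b ↔ IsLUB P b := by
  rw [IsLUB, IsLUB, upperBounds_sdiff_bot]

lemma Set.Pairwise.image_of_inf_bot [SemilatticeInf B] [OrderBot B] {f : B → B}
    (hf : ∀ c d, f (c ⊓ d) = f c ⊓ f d) (hf0 : f ⊥ = ⊥) (hP : P.Pairwise (· ⊓ · = ⊥)) :
    (f '' P).Pairwise (· ⊓ · = ⊥) := by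
  rintro _ ⟨c, hc, rfl⟩ _ ⟨d, hd, rfl⟩ hne
  rw [← hf, hP hc hd (ne_of_apply_ne f hne), hf0]

lemma IsLUB.inf_left [HeytingAlgebra B] (h : IsLUB P b) (a : B) :
    IsLUB ((a ⊓ ·) '' P) (a ⊓ b) := by
  refine ⟨?_, fun u hu => ?_⟩
  · rintro _ ⟨c, hc, rfl⟩
    exact inf_le_inf_left a (h.1 hc)
  · have hb : b ≤ a ⇨ u := h.2 fun c hc => le_himp_iff.2 (inf_comm c a ▸ hu ⟨c, hc, rfl⟩)
    exact (inf_le_inf_left a hb).trans inf_himp_le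

lemma IsLUB.disjoint_of_forall_disjoint [HeytingAlgebra B] {q : B} (h : IsLUB P b)
    (hq : ∀ p ∈ P, Disjoint p q) : Disjoint b q :=
  le_compl_iff_disjoint_right.1 <| h.2 fun p hp => le_compl_iff_disjoint_right.2 (hq p hp)

lemma isLUB_of_isLUB_top [BooleanAlgebra B] (hQ : IsLUB Q ⊤) (hb : b ∈ upperBounds P)
    (hcover : ∀ q ∈ Q, q ∈ P ∨ Disjoint q b) : IsLUB P b := by
  refine ⟨hb, fun u hu => ?_⟩
  have htop : ⊤ ≤ u ⊔ bᶜ := hQ.2 fun q hq => (hcover q hq).elim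
    (fun hqP => le_sup_of_le_left (hu hqP))
    (fun hqb => le_sup_of_le_right (le_compl_iff_disjoint_right.2 hqb))
  simpa using codisjoint_iff_compl_le_left.1 (codisjoint_iff_le_sup.2 htop)

end Lattice

section Partition

variable {B : Type*} [BooleanAlgebra B] {P : Set B} {b : B}

lemma isPartitionOf_sdiff_bot (hd : P.Pairwise (· ⊓ · = ⊥)) (h : IsLUB P b) :
    IsPartitionOf (P \ {⊥}) b :=
  ⟨fun h => h.2 rfl, hd.mono Set.sdiff_subset, isLUB_sdiff_bot_iff.2 h⟩

lemma isPartitionOf_pair_compl (a : B) : IsPartitionOf ({a, aᶜ} \ {⊥}) ⊤ :=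
  isPartitionOf_sdiff_bot (Set.pairwise_pair.2 fun _ => ⟨inf_compl_eq_bot, compl_inf_eq_bot⟩)
    (sup_compl_eq_top (x := a) ▸ isLUB_pair)

lemma IsPartitionOf.inf_left (hP : IsPartitionOf P b) (a : B) :
    IsPartitionOf ((a ⊓ ·) '' P \ {⊥}) (a ⊓ b) :=
  isPartitionOf_sdiff_bot (Set.Pairwise.image_of_inf_bot (fun _ _ => inf_inf_distrib_left _ _ _)
    (inf_bot_eq a) hP.2.1) (hP.2.2.inf_left a)

lemma IsPartitionOf.memJAt_of_finite (Z : ZeroDimTopology B) (hP : IsPartitionOf P b)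
    (hfin : P.Finite) : MemJAt Z P b := by
  have hdisj : ∀ c ∈ P, bᶜ ≠ c → bᶜ ⊓ c = ⊥ ∧ c ⊓ bᶜ = ⊥ := fun c hc _ =>
    have hcb : c ⊓ bᶜ = ⊥ := disjoint_iff.1 (disjoint_compl_right.mono_left (hP.2.2.1 hc))
    ⟨inf_comm c bᶜ ▸ hcb, hcb⟩
  refine ⟨hP, insert bᶜ P \ {⊥}, Z.finite_mem _ (hfin.insert _).sdiff ?_, fun c hc => ⟨.inr hc, ?_⟩⟩
  · exact isPartitionOf_sdiff_bot (Set.pairwise_insert.2 ⟨hP.2.1, hdisj⟩)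
      (compl_sup_eq_top (x := b) ▸ hP.2.2.insert bᶜ)
  · exact fun h => hP.1 (h ▸ hc)

lemma MemJAt.inf_left {Z : ZeroDimTopology B} (hP : MemJAt Z P b) (a : B) :
    MemJAt Z ((a ⊓ ·) '' P \ {⊥}) (a ⊓ b) := by
  obtain ⟨hPb, Q, hQ, hPQ⟩ := hP
  refine ⟨hPb.inf_left a, _, Z.refine_mem Q hQ (fun _ => {a, aᶜ} \ {⊥})
    (fun _ _ => Z.finite_mem _ (Set.toFinite _) (isPartitionOf_pair_compl a)), ?_⟩
  rintro _ ⟨⟨c, hc, rfl⟩, hne⟩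
  have ha : a ≠ ⊥ := by
    rintro rfl
    exact hne (bot_inf_eq c)
  exact ⟨hne, c, hPQ hc, a, ⟨.inl rfl, ha⟩, inf_comm a c⟩

lemma MemJAt.image {Z : ZeroDimTopology B} (f : BoundedLatticeHom B B)
    (hf : ∀ Q ∈ Z.J, f '' Q \ {⊥} ∈ Z.J) (hP : MemJAt Z P b) :
    MemJAt Z (f '' P \ {⊥}) (f b) := by
  obtain ⟨hPb, Q, hQ, hPQ⟩ := hP
  have hQpart := Z.partitionOf_mem Q hQ
  have hcover : ∀ q ∈ f '' Q, q ∈ f '' P ∨ Disjoint q (f b) := by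
    rintro _ ⟨q, hq, rfl⟩
    by_cases hqP : q ∈ P
    · exact .inl ⟨q, hqP, rfl⟩
    have hqb : Disjoint q b := (hPb.2.2.disjoint_of_forall_disjoint fun p hp =>
      disjoint_iff.2 (hQpart.2.1 p (hPQ hp) q hq fun h => hqP (h ▸ hp))).symm
    exact .inr (disjoint_iff.2 (by rw [← map_inf, disjoint_iff.1 hqb, map_bot]))
  refine ⟨isPartitionOf_sdiff_bot (Set.Pairwise.image_of_inf_bot (map_inf f) (map_bot f) hPb.2.1)
    (isLUB_of_isLUB_top (isLUB_sdiff_bot_iff.1 (Z.partitionOf_mem _ (hf Q hQ)).2.2) ?_ hcover),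
    _, hf Q hQ, Set.sdiff_subset_sdiff_left (Set.image_mono hPQ)⟩
  rintro _ ⟨c, hc, rfl⟩
  exact OrderHomClass.mono f (hPb.2.2.1 hc)

end Partition

section Ideal

variable {B : Type*} [BooleanAlgebra B] {Z : ZeroDimTopology B} {I : Set B}

lemma IsJClosedIdeal.iInter {ι : Sort*} {I : ι → Set B} (hI : ∀ i, IsJClosedIdeal Z (I i)) :
    IsJClosedIdeal Z (⋂ i, I i) := by
  simp only [IsJClosedIdeal, Set.mem_iInter, Set.subset_iInter_iff] at hI ⊢
  exact ⟨fun i => (hI i).1, fun b c hbc hc i => (hI i).2.1 b c hbc (hc i),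
    fun b c hb hc i => (hI i).2.2.1 b c (hb i) (hc i),
    fun b P hP hPI i => (hI i).2.2.2 b P hP (hPI i)⟩

lemma IsJClosedIdeal.preimage {F : Type*} [FunLike F B B] [SupBotHomClass F B B]
    (hI : IsJClosedIdeal Z I) (f : F)
    (hf : ∀ (P : Set B) (b : B), MemJAt Z P b → MemJAt Z (f '' P \ {⊥}) (f b)) :
    IsJClosedIdeal Z (f ⁻¹' I) := by
  refine ⟨by simpa using hI.1, fun b c hbc hc => hI.2.1 _ _ (OrderHomClass.mono f hbc) hc,
    fun b c hb hc => by simpa using hI.2.2.1 _ _ hb hc, fun b P hP hPI => ?_⟩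
  refine hI.2.2.2 _ _ (hf P b hP) ?_
  rintro _ ⟨⟨c, hc, rfl⟩, -⟩
  exact hPI hc

def supBotHomInfLeft (a : B) : SupBotHom B B where
  toFun := (a ⊓ ·)
  map_sup' := inf_sup_left a
  map_bot' := inf_bot_eq a

lemma IsJClosedIdeal.preimage_inf_left (hI : IsJClosedIdeal Z I) (a : B) :
    IsJClosedIdeal Z ((a ⊓ ·) ⁻¹' I) :=
  hI.preimage (supBotHomInfLeft a) fun _ _ hP => hP.inf_left a

end Ideal

section BJSet

variable {B : Type*} [BooleanAlgebra B] {Z : ZeroDimTopology B} {X : Type*}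

lemma BJSet.rel_sup (S : BJSet Z X) {u v : B} {x y : X} (hu : S.rel u x y)
    (hv : S.rel v x y) : S.rel (u ⊔ v) x y := by
  have hP : IsPartitionOf ({u, v \ u} \ {⊥}) (u ⊔ v) :=
    isPartitionOf_sdiff_bot
      (Set.pairwise_pair.2 fun _ => ⟨inf_sdiff_self_right, inf_sdiff_self_left⟩)
      (sup_sdiff_self u v ▸ isLUB_pair)
  refine S.glue _ _ (hP.memJAt_of_finite Z (Set.toFinite _)) x y ?_
  rintro c ⟨rfl | rfl, -⟩
  · exact hu
  · exact S.mono v _ x y sdiff_le hv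

lemma BJSet.isJClosedIdeal_setOf_rel (S : BJSet Z X) (x y : X) :
    IsJClosedIdeal Z {c | S.rel c x y} :=
  ⟨S.rel_bot x y, fun b c hbc hc => S.mono c b x y hbc hc, fun _ _ hb hc => S.rel_sup hb hc,
    fun b P hP hPI => S.glue b P hP x y hPI⟩

end BJSet

section MatchedPair

variable {B : Type*} [BooleanAlgebra B] {Z : ZeroDimTopology B} {M : Type*} [Monoid M]

def MatchedPair.actHom (MP : MatchedPair Z M) (n : M) : BoundedLatticeHom B B where
  toFun := MP.act n
  map_sup' := MP.act_sup n
  map_inf' := MP.act_inf n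
  map_top' := MP.act_top n
  map_bot' := MP.act_bot n

lemma MatchedPair.image_act_sdiff_bot_mem (MP : MatchedPair Z M) (n : M) {Q : Set B}
    (hQ : Q ∈ Z.J) : MP.actHom n '' Q \ {⊥} ∈ Z.J := by
  convert MP.act_J n Q hQ using 1
  ext x
  simp [MatchedPair.actHom, and_comm, eq_comm]

lemma IsJClosedIdeal.preimage_act {I : Set B} (hI : IsJClosedIdeal Z I) (MP : MatchedPair Z M)
    (n : M) : IsJClosedIdeal Z (MP.act n ⁻¹' I) :=
  hI.preimage (MP.actHom n) fun _ _ hP => hP.image _ fun _ => MP.image_act_sdiff_bot_mem n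

end MatchedPair

namespace relM

variable {B : Type*} [BooleanAlgebra B] {Z : ZeroDimTopology B} {M : Type*} [Monoid M]
  {X : Type*} {MP : MatchedPair Z M} {S : BJSet Z X} {m n : M} {b c : B} {x y z : X}

lemma of_rel (h : S.rel b x y) : relM MP S m (MP.act m b) x y :=
  fun _ _ hgen => hgen b h

lemma mono (hcb : c ≤ b) (h : relM MP S m b x y) : relM MP S m c x y :=
  fun I hI hgen => hI.2.1 c b hcb (h I hI hgen)

lemma of_memJAt {P : Set B} (hP : MemJAt Z P b) (h : ∀ c ∈ P, relM MP S m c x y) :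
    relM MP S m b x y :=
  fun I hI hgen => hI.2.2.2 b P hP fun c hc => h c hc I hI hgen

lemma refl : relM MP S m b x x := by
  intro I hI hgen
  have htop : MP.act m ⊤ ∈ I := hgen ⊤ ((S.rel_top x x).2 rfl)
  rw [MP.act_top] at htop
  exact hI.2.1 b ⊤ le_top htop

lemma symm (h : relM MP S m b x y) : relM MP S m b y x :=
  fun I hI hgen => h I hI fun c hc => hgen c ((S.equiv c).symm hc)

lemma inf_trans (hxy : relM MP S m b x y) (hyz : relM MP S m c y z) :
    relM MP S m (b ⊓ c) x z := by
  intro I hI hgen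
  have hb : b ∈ ⋂ d : {d // S.rel d y z}, (MP.act m d ⊓ ·) ⁻¹' I := by
    refine hxy _ (IsJClosedIdeal.iInter fun d => hI.preimage_inf_left _) fun e he => ?_
    refine Set.mem_iInter.2 fun d => ?_
    show MP.act m d ⊓ MP.act m e ∈ I
    rw [← MP.act_inf]
    exact hgen _ ((S.equiv _).trans (S.mono e _ x y inf_le_right he)
      (S.mono d _ y z inf_le_left d.2))
  refine hyz _ (hI.preimage_inf_left b) fun d hd => ?_
  show b ⊓ MP.act m d ∈ I
  exact inf_comm (MP.act m d) b ▸ Set.mem_iInter.1 hb ⟨d, hd⟩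

lemma trans (hxy : relM MP S m b x y) (hyz : relM MP S m b y z) : relM MP S m b x z :=
  inf_idem b ▸ hxy.inf_trans hyz

lemma mul_left (n : M) (h : relM MP S m b x y) : relM MP S (n * m) (MP.act n b) x y :=
  fun _ hI hgen => h _ (hI.preimage_act MP n) fun c hc => (MP.act_mul n m c ▸ hgen c hc :)

lemma of_rel_of_le (hmn : MP.rel b m n) (hcb : c ≤ b) (h : relM MP S m c x y) :
    relM MP S n c x y := by
  intro I hI hgen
  have hc : b ⊓ c ∈ I := h _ (hI.preimage_inf_left b) fun e he => by
    show b ⊓ MP.act m e ∈ I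
    rw [MP.rel_act b e m n hmn]
    exact hI.2.1 _ _ inf_le_right (hgen e he)
  rwa [inf_eq_right.2 hcb] at hc

end relM

lemma BJSet.rel_smul_of_relM {B : Type*} [BooleanAlgebra B] {Z : ZeroDimTopology B}
    {M : Type*} [Monoid M] {X : Type*} {MP : MatchedPair Z M} (S : BJSet Z X)
    (smul : M → X → X)
    (hsmul : ∀ (m : M) (b : B) (x y : X), S.rel b x y → S.rel (MP.act m b) (smul m x) (smul m y))
    {m : M} {b : B} {x y : X} (h : relM MP S m b x y) : S.rel b (smul m x) (smul m y) :=
  h _ (S.isJClosedIdeal_setOf_rel _ _) fun c hc => hsmul m c x y hc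

theorem stmt_19_general {B : Type*} [BooleanAlgebra B]
    {Z : ZeroDimTopology B} {M : Type*} [Monoid M] (MP : MatchedPair Z M)
    {X : Type*} (S : BJSet Z X) :
    (∀ (m : M) (b : B), Equivalence (fun x y : X => relM MP S m b x y)) ∧
    -- (i)
    (∀ (m : M) (b : B) (x y : X), S.rel b x y → relM MP S m (MP.act m b) x y) ∧
    -- (ii)
    (∀ (m : M) (b c : B) (x y : X), c ≤ b → relM MP S m b x y → relM MP S m c x y) ∧
    -- (iii)
    (∀ (m : M) (b : B) (P : Set B), MemJAt Z P b →
      ∀ x y : X, (∀ c ∈ P, relM MP S m c x y) → relM MP S m b x y) ∧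
    -- (iv)
    (∀ (m n : M) (b : B) (x y : X),
      relM MP S m b x y → relM MP S (n * m) (MP.act n b) x y) ∧
    -- (v): if `X` is moreover a `⟨B_𝒥, M⟩`-set
    (∀ smul : M → X → X,
      (∀ x : X, smul 1 x = x) →
      (∀ (m n : M) (x : X), smul (m * n) x = smul m (smul n x)) →
      (∀ (m n : M) (b : B) (x : X), MP.rel b m n → S.rel b (smul m x) (smul n x)) →
      (∀ (m : M) (b : B) (x y : X), S.rel b x y → S.rel (MP.act m b) (smul m x) (smul m y)) →
      ∀ (m : M) (b : B) (x y : X), relM MP S m b x y → S.rel b (smul m x) (smul m y)) ∧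
    -- (vi)
    (∀ (m n : M) (b : B), MP.rel b m n →
      ∀ c : B, c ≤ b → ∀ x y : X, relM MP S m c x y ↔ relM MP S n c x y) :=
  ⟨fun _ _ => ⟨fun _ => relM.refl, relM.symm, relM.trans⟩,
    fun _ _ _ _ => relM.of_rel,
    fun _ _ _ _ _ => relM.mono,
    fun _ _ _ hP _ _ => relM.of_memJAt hP,
    fun _ n _ _ _ => relM.mul_left n,
    fun smul _ _ _ hsmul _ _ _ _ => S.rel_smul_of_relM smul hsmul,
    fun _ _ b hmn _ hcb _ _ =>
      ⟨relM.of_rel_of_le hmn hcb, relM.of_rel_of_le ((MP.equiv b).symm hmn) hcb⟩⟩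

/-- For a Grothendieck matched pair `⟨B_𝒥, M⟩` and a `B_𝒥`-set `X`, the relations `≡ᵐ_b`
are equivalence relations and satisfy properties (i)–(vi) of Lemma 12. -/
theorem stmt_19 {B : Type*} [BooleanAlgebra B] (hB : (⊥ : B) ≠ ⊤)
    {Z : ZeroDimTopology B} {M : Type*} [Monoid M] (MP : MatchedPair Z M)
    {X : Type*} (S : BJSet Z X) :
    (∀ (m : M) (b : B), Equivalence (fun x y : X => relM MP S m b x y)) ∧
    -- (i)
    (∀ (m : M) (b : B) (x y : X), S.rel b x y → relM MP S m (MP.act m b) x y) ∧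
    -- (ii)
    (∀ (m : M) (b c : B) (x y : X), c ≤ b → relM MP S m b x y → relM MP S m c x y) ∧
    -- (iii)
    (∀ (m : M) (b : B) (P : Set B), MemJAt Z P b →
      ∀ x y : X, (∀ c ∈ P, relM MP S m c x y) → relM MP S m b x y) ∧
    -- (iv)
    (∀ (m n : M) (b : B) (x y : X),
      relM MP S m b x y → relM MP S (n * m) (MP.act n b) x y) ∧
    -- (v): if `X` is moreover a `⟨B_𝒥, M⟩`-set
    (∀ smul : M → X → X,
      (∀ x : X, smul 1 x = x) →
      (∀ (m n : M) (x : X), smul (m * n) x = smul m (smul n x)) →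
      (∀ (m n : M) (b : B) (x : X), MP.rel b m n → S.rel b (smul m x) (smul n x)) →
      (∀ (m : M) (b : B) (x y : X), S.rel b x y → S.rel (MP.act m b) (smul m x) (smul m y)) →
      ∀ (m : M) (b : B) (x y : X), relM MP S m b x y → S.rel b (smul m x) (smul m y)) ∧
    -- (vi)
    (∀ (m n : M) (b : B), MP.rel b m n →
      ∀ c : B, c ≤ b → ∀ x y : X, relM MP S m c x y ↔ relM MP S n c x y) :=
  stmt_19_general MP S
end
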